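/- Let F(β) = (1/n)Σᵢ |yᵢ − xᵢᵀβ| + λ₁‖β‖₁ + (λ₂/2)‖β‖₂². Then F is λ₂-strongly convex on ℝᵖ, and consequently if β̂_D and β̂_{D′} are minimizers of F over datasets D and D′ differing in one of the n points, and ‖xᵢ‖₂ ≤ c_x for all points, then ‖β̂_D − β̂_{D′}‖₂ ≤ 2 c_x/(n λ₂). -/

import Mathlib

/-!
Removing `(λ₂/2)‖β‖²` from `F` leaves a nonnegative combination of absolute values of affine
functions, so `F` is `λ₂`-strongly convex. Strong convexity gives quadratic growth at a minimizer:
`f x + (m/2)‖x - y‖² ≤ f y`. Adding this inequality for `F_D` at `β̂_D` and for `F_{D'}` at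
`β̂_{D'}` bounds `λ₂‖β̂_D - β̂_{D'}‖²` by the increment of `F_D - F_{D'}` between the two
minimizers. That difference only involves the one changed data point, so it is
`(2 c_x / n)`-Lipschitz, and dividing by `‖β̂_D - β̂_{D'}‖` gives the bound.
-/

open scoped RealInnerProductSpace

/-- The elastic-net penalized LAD objective. -/
noncomputable def objF {p n : ℕ} (lam1 lam2 : ℝ)
    (D : Fin n → ℝ × EuclideanSpace ℝ (Fin p)) (β : EuclideanSpace ℝ (Fin p)) : ℝ :=
  (1 / n) * ∑ i, |(D i).1 - ⟪(D i).2, β⟫| + lam1 * ∑ j, |β j| + (lam2 / 2) * ‖β‖^2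

open Set Filter Topology

theorem ConvexOn.fun_sum {𝕜 E β ι : Type*} [Semiring 𝕜] [PartialOrder 𝕜] [AddCommMonoid E]
    [AddCommMonoid β] [PartialOrder β] [IsOrderedAddMonoid β] [SMul 𝕜 E] [Module 𝕜 β]
    {s : Set E} (hs : Convex 𝕜 s) {t : Finset ι} {f : ι → E → β}
    (h : ∀ i ∈ t, ConvexOn 𝕜 s (f i)) : ConvexOn 𝕜 s fun x ↦ ∑ i ∈ t, f i x := by
  classical
  induction t using Finset.induction with
  | empty => simpa using convexOn_const (0 : β) hs
  | insert i t hi ih =>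
    simp_rw [Finset.sum_insert hi]
    exact (h i (t.mem_insert_self i)).add (ih fun j hj ↦ h j (Finset.mem_insert_of_mem hj))

theorem convexOn_abs_sub_linearMap {E : Type*} [AddCommMonoid E] [Module ℝ E] (c : ℝ)
    (ℓ : E →ₗ[ℝ] ℝ) : ConvexOn ℝ univ fun x ↦ |c - ℓ x| := by
  have h := (convexOn_dist c convex_univ).comp_linearMap ℓ
  simp only [Function.comp_def, Real.dist_eq, preimage_univ] at h
  simpa only [abs_sub_comm c] using h

theorem abs_sub_inner_sub_abs_sub_inner_le {F : Type*} [SeminormedAddCommGroup F]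
    [InnerProductSpace ℝ F] (c : ℝ) (x u v : F) :
    |c - ⟪x, u⟫| - |c - ⟪x, v⟫| ≤ ‖x‖ * ‖u - v‖ :=
  calc |c - ⟪x, u⟫| - |c - ⟪x, v⟫| ≤ |(c - ⟪x, u⟫) - (c - ⟪x, v⟫)| := abs_sub_abs_le_abs_sub _ _
    _ = |⟪x, v - u⟫| := by rw [inner_sub_right]; ring_nf
    _ ≤ ‖x‖ * ‖u - v‖ := by rw [norm_sub_rev]; exact abs_real_inner_le_norm x _

section StrongConvexity

variable {E : Type*} [NormedAddCommGroup E] [NormedSpace ℝ E] {s : Set E} {m : ℝ} {f g : E → ℝ}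
  {x y : E}

theorem StrongConvexOn.add_sq_norm_sub_le_of_isMinOn (hf : StrongConvexOn s m f)
    (hx : IsMinOn f s x) (hxs : x ∈ s) (hys : y ∈ s) : f x + m / 2 * ‖x - y‖ ^ 2 ≤ f y := by
  -- compare `f x` with `f` at `(1 - t) • x + t • y`, divide by `t` and let `t → 0⁺`
  have along_segment : ∀ t ∈ Ioo (0 : ℝ) 1, f x + (1 - t) * (m / 2 * ‖x - y‖ ^ 2) ≤ f y := by
    rintro t ⟨ht₀, ht₁⟩
    have h1t : 0 ≤ 1 - t := sub_nonneg.2 ht₁.le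
    have hconv := hf.2 hxs hys h1t ht₀.le (sub_add_cancel 1 t)
    have hmin := isMinOn_iff.1 hx _ (hf.1 hxs hys h1t ht₀.le (sub_add_cancel 1 t))
    simp only [smul_eq_mul] at hconv
    have : t * (f x + (1 - t) * (m / 2 * ‖x - y‖ ^ 2)) ≤ t * f y := by linarith
    exact le_of_mul_le_mul_left this ht₀
  have hlim : Tendsto (fun t : ℝ ↦ f x + (1 - t) * (m / 2 * ‖x - y‖ ^ 2)) (𝓝[>] 0)
      (𝓝 (f x + m / 2 * ‖x - y‖ ^ 2)) := by
    refine tendsto_nhdsWithin_of_tendsto_nhds ((?_ : Continuous _).tendsto' 0 _ (by simp))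
    fun_prop
  exact le_of_tendsto hlim (eventually_of_mem (Ioo_mem_nhdsGT one_pos) along_segment)

theorem norm_sub_le_of_strongConvexOn_of_isMinOn {L : ℝ} (hm : 0 < m) (hL : 0 ≤ L)
    (hf : StrongConvexOn univ m f) (hg : StrongConvexOn univ m g)
    (hx : IsMinOn f univ x) (hy : IsMinOn g univ y)
    (hfg : (f y - g y) - (f x - g x) ≤ L * ‖y - x‖) : ‖x - y‖ ≤ L / m := by
  have hfx := hf.add_sq_norm_sub_le_of_isMinOn hx (mem_univ x) (mem_univ y)
  have hgy := hg.add_sq_norm_sub_le_of_isMinOn hy (mem_univ y) (mem_univ x)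
  rw [norm_sub_rev] at hgy hfg
  have hsq : m * ‖x - y‖ ^ 2 ≤ L * ‖x - y‖ := by linarith
  rcases (norm_nonneg (x - y)).eq_or_lt with hd | hd
  · rw [← hd]; positivity
  · rw [le_div_iff₀ hm]; nlinarith

end StrongConvexity

section ElasticNetLAD

variable {p n : ℕ} {lam1 lam2 : ℝ}

theorem strongConvexOn_objF (hlam1 : 0 ≤ lam1) (D : Fin n → ℝ × EuclideanSpace ℝ (Fin p)) :
    StrongConvexOn univ lam2 (objF lam1 lam2 D) := by
  rw [strongConvexOn_iff_convex]
  have hloss : ConvexOn ℝ univ fun β ↦ ∑ i, |(D i).1 - ⟪(D i).2, β⟫| :=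
    .fun_sum convex_univ fun i _ ↦ convexOn_abs_sub_linearMap _ (innerₛₗ ℝ (D i).2)
  have hl1 : ConvexOn ℝ univ fun β : EuclideanSpace ℝ (Fin p) ↦ ∑ j, |β j| :=
    .fun_sum convex_univ fun j _ ↦ by
      simpa using convexOn_abs_sub_linearMap 0 (EuclideanSpace.proj j : _ →L[ℝ] ℝ).toLinearMap
  refine ((hloss.smul (by positivity : 0 ≤ 1 / (n : ℝ))).add (hl1.smul hlam1)).congr
    fun β _ ↦ ?_
  simp only [objF, Pi.add_apply, smul_eq_mul]
  ring

variable {D D' : Fin n → ℝ × EuclideanSpace ℝ (Fin p)} {i₀ : Fin n}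

theorem objF_sub_objF_of_eq_of_ne (h : ∀ i, i ≠ i₀ → D i = D' i) (β : EuclideanSpace ℝ (Fin p)) :
    objF lam1 lam2 D β - objF lam1 lam2 D' β =
      1 / n * (|(D i₀).1 - ⟪(D i₀).2, β⟫| - |(D' i₀).1 - ⟪(D' i₀).2, β⟫|) := by
  have hloss : ∑ i, |(D i).1 - ⟪(D i).2, β⟫| - ∑ i, |(D' i).1 - ⟪(D' i).2, β⟫| =
      |(D i₀).1 - ⟪(D i₀).2, β⟫| - |(D' i₀).1 - ⟪(D' i₀).2, β⟫| := by
    rw [← Finset.sum_sub_distrib]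
    exact Finset.sum_eq_single i₀ (fun i _ hi ↦ by rw [h i hi, sub_self]) (by simp)
  simp only [objF]
  linear_combination 1 / (n : ℝ) * hloss

theorem objF_sub_objF_sub_le {cx : ℝ} (hD : ‖(D i₀).2‖ ≤ cx) (hD' : ‖(D' i₀).2‖ ≤ cx)
    (h : ∀ i, i ≠ i₀ → D i = D' i) (u v : EuclideanSpace ℝ (Fin p)) :
    (objF lam1 lam2 D u - objF lam1 lam2 D' u) - (objF lam1 lam2 D v - objF lam1 lam2 D' v) ≤
      2 * cx / n * ‖u - v‖ := by
  have hu : |(D i₀).1 - ⟪(D i₀).2, u⟫| - |(D i₀).1 - ⟪(D i₀).2, v⟫| ≤ cx * ‖u - v‖ :=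
    (abs_sub_inner_sub_abs_sub_inner_le _ _ u v).trans (by gcongr)
  have hv : |(D' i₀).1 - ⟪(D' i₀).2, v⟫| - |(D' i₀).1 - ⟪(D' i₀).2, u⟫| ≤ cx * ‖u - v‖ :=
    (abs_sub_inner_sub_abs_sub_inner_le _ _ v u).trans (by rw [norm_sub_rev]; gcongr)
  rw [objF_sub_objF_of_eq_of_ne h, objF_sub_objF_of_eq_of_ne h]
  have := mul_le_mul_of_nonneg_left (add_le_add hu hv) (by positivity : 0 ≤ 1 / (n : ℝ))
  linear_combination this

end ElasticNetLAD

theorem elastic_net_LAD_strong_convexity_and_sensitivity_general {p n : ℕ}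
    (lam1 lam2 : ℝ) (hlam1 : 0 ≤ lam1) (hlam2 : 0 < lam2) (cx : ℝ) :
    (∀ D : Fin n → ℝ × EuclideanSpace ℝ (Fin p),
      StrongConvexOn Set.univ lam2 (objF lam1 lam2 D)) ∧
    (∀ (D D' : Fin n → ℝ × EuclideanSpace ℝ (Fin p)),
      (∀ i, ‖(D i).2‖ ≤ cx) → (∀ i, ‖(D' i).2‖ ≤ cx) →
      (∃ i₀, ∀ i, i ≠ i₀ → D i = D' i) →
      ∀ (βD βD' : EuclideanSpace ℝ (Fin p)),
        IsMinOn (objF lam1 lam2 D) Set.univ βD →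
        IsMinOn (objF lam1 lam2 D') Set.univ βD' →
        ‖βD - βD'‖ ≤ 2 * cx / (n * lam2)) := by
  refine ⟨strongConvexOn_objF hlam1, ?_⟩
  rintro D D' hD hD' ⟨i₀, hi₀⟩ βD βD' hmin hmin'
  have hcx : 0 ≤ cx := (norm_nonneg _).trans (hD i₀)
  rw [← div_div]
  exact norm_sub_le_of_strongConvexOn_of_isMinOn hlam2 (by positivity)
    (strongConvexOn_objF hlam1 D) (strongConvexOn_objF hlam1 D') hmin hmin'
    (objF_sub_objF_sub_le (hD i₀) (hD' i₀) hi₀ βD' βD)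

theorem elastic_net_LAD_strong_convexity_and_sensitivity {p n : ℕ} (hn : 1 ≤ n)
    (lam1 lam2 : ℝ) (hlam1 : 0 ≤ lam1) (hlam2 : 0 < lam2) (cx : ℝ) :
    (∀ D : Fin n → ℝ × EuclideanSpace ℝ (Fin p),
      StrongConvexOn Set.univ lam2 (objF lam1 lam2 D)) ∧
    (∀ (D D' : Fin n → ℝ × EuclideanSpace ℝ (Fin p)),
      (∀ i, ‖(D i).2‖ ≤ cx) → (∀ i, ‖(D' i).2‖ ≤ cx) →
      (∃ i₀, ∀ i, i ≠ i₀ → D i = D' i) →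
      ∀ (βD βD' : EuclideanSpace ℝ (Fin p)),
        IsMinOn (objF lam1 lam2 D) Set.univ βD →
        IsMinOn (objF lam1 lam2 D') Set.univ βD' →
        ‖βD - βD'‖ ≤ 2 * cx / (n * lam2)) :=
  elastic_net_LAD_strong_convexity_and_sensitivity_general lam1 lam2 hlam1 hlam2 cx
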